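/- arXiv:2010.08352 — 2 statements merged into one kernel-verified Lean document; each statement's English description precedes it below -/
import Mathlib

section
/- If a bunched sequent Δ ⊢ φ has an LBI-proof, then it has a cut-free LBI-proof, i.e. an LBI-proof containing no instance of the cut rule. -/
namespace BIPaper

/-- Formulas of BI: `φ ::= ⊤ | ⊥ | I | A | φ∧φ | φ∨φ | φ→φ | φ∗φ | φ−∗φ`. -/
inductive Formula : Type where
  | atom (a : ℕ)
  | top
  | bot
  | unit
  | and (φ ψ : Formula)
  | or (φ ψ : Formula)
  | imp (φ ψ : Formula)
  | star (φ ψ : Formula)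
  | wand (φ ψ : Formula)
/-- Bunches: `Δ ::= φ | ∅₊ | ∅ₓ | (Δ;Δ) | (Δ,Δ)`. -/
inductive Bunch : Type where
  | frm (φ : Formula)
  | eplus
  | etimes
  | semi (Δ₁ Δ₂ : Bunch)
  | comma (Δ₁ Δ₂ : Bunch)

/-- Bunched contexts `Δ(·)`: a bunch with a hole, used for sub-bunch replacement. -/
inductive BCtx : Type where
  | hole
  | semiL (C : BCtx) (Δ : Bunch)
  | semiR (Δ : Bunch) (C : BCtx)
  | commaL (C : BCtx) (Δ : Bunch)
  | commaR (Δ : Bunch) (C : BCtx)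

/-- Filling the hole of a bunched context. -/
def BCtx.fill : BCtx → Bunch → Bunch
  | .hole, Δ => Δ
  | .semiL C Δ', Δ => .semi (C.fill Δ) Δ'
  | .semiR Δ' C, Δ => .semi Δ' (C.fill Δ)
  | .commaL C Δ', Δ => .comma (C.fill Δ) Δ'
  | .commaR Δ' C, Δ => .comma Δ' (C.fill Δ)

/-- Coherent equivalence `≡` of bunches: least congruence making
`(; , ∅₊)` and `(, , ∅ₓ)` commutative monoids. -/
inductive BEquiv : Bunch → Bunch → Prop where
  | refl (Δ) : BEquiv Δ Δ
  | symm : BEquiv Δ Δ' → BEquiv Δ' Δ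
  | trans : BEquiv Δ₁ Δ₂ → BEquiv Δ₂ Δ₃ → BEquiv Δ₁ Δ₃
  | semiComm (Δ₁ Δ₂) : BEquiv (.semi Δ₁ Δ₂) (.semi Δ₂ Δ₁)
  | semiAssoc (Δ₁ Δ₂ Δ₃) : BEquiv (.semi (.semi Δ₁ Δ₂) Δ₃) (.semi Δ₁ (.semi Δ₂ Δ₃))
  | semiUnit (Δ) : BEquiv (.semi Δ .eplus) Δ
  | commaComm (Δ₁ Δ₂) : BEquiv (.comma Δ₁ Δ₂) (.comma Δ₂ Δ₁)
  | commaAssoc (Δ₁ Δ₂ Δ₃) : BEquiv (.comma (.comma Δ₁ Δ₂) Δ₃) (.comma Δ₁ (.comma Δ₂ Δ₃))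
  | commaUnit (Δ) : BEquiv (.comma Δ .etimes) Δ
  | congr (C : BCtx) : BEquiv Δ Δ' → BEquiv (C.fill Δ) (C.fill Δ')

/-- The bunched sequent calculus LBI.  `LBI b g Δ φ` means the sequent `Δ ⊢ φ`
is derivable, where the flag `b` permits the `cut` rule (so `LBI true true` is
full LBI and `LBI false true` is cut-free LBI), and the flag `g` permits the
general axiom `Ax : φ ⊢ φ` (the atomic axiom is always available; taking
`g := false` restricts `Ax` to propositional letters). -/
inductive LBI : Bool → Bool → Bunch → Formula → Prop where
  | ax (φ) : LBI b true (.frm φ) φ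
  | axAtom (a : ℕ) : LBI b g (.frm (.atom a)) (.atom a)
  | exch : LBI b g Δ φ → BEquiv Δ Δ' → LBI b g Δ' φ
  | weak (C : BCtx) (Δ'') : LBI b g (C.fill Δ') φ → LBI b g (C.fill (.semi Δ' Δ'')) φ
  | contr (C : BCtx) : LBI b g (C.fill (.semi Δ' Δ')) φ → LBI b g (C.fill Δ') φ
  | botL (C : BCtx) (φ) : LBI b g (C.fill (.frm .bot)) φ
  | topR : LBI b g .eplus .top
  | unitR : LBI b g .etimes .unit
  | unitL (C : BCtx) : LBI b g (C.fill .etimes) φ → LBI b g (C.fill (.frm .unit)) φ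
  | andL (C : BCtx) : LBI b g (C.fill (.semi (.frm φ) (.frm ψ))) χ →
      LBI b g (C.fill (.frm (.and φ ψ))) χ
  | andR : LBI b g Γ φ → LBI b g Δ ψ → LBI b g (.semi Γ Δ) (.and φ ψ)
  | orL (C : BCtx) : LBI b g (C.fill (.frm φ)) χ → LBI b g (C.fill (.frm ψ)) χ →
      LBI b g (C.fill (.frm (.or φ ψ))) χ
  | orR1 : LBI b g Δ φ → LBI b g Δ (.or φ ψ)
  | orR2 : LBI b g Δ ψ → LBI b g Δ (.or φ ψ)
  | impL (C : BCtx) : LBI b g Γ φ → LBI b g (C.fill (.frm ψ)) χ →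
      LBI b g (C.fill (.semi Γ (.frm (.imp φ ψ)))) χ
  | impR : LBI b g (.semi Δ (.frm φ)) ψ → LBI b g Δ (.imp φ ψ)
  | starL (C : BCtx) : LBI b g (C.fill (.comma (.frm φ) (.frm ψ))) χ →
      LBI b g (C.fill (.frm (.star φ ψ))) χ
  | starR : LBI b g Γ φ → LBI b g Δ ψ → LBI b g (.comma Γ Δ) (.star φ ψ)
  | wandL (C : BCtx) : LBI b g Γ φ → LBI b g (C.fill (.frm ψ)) χ →
      LBI b g (C.fill (.comma Γ (.frm (.wand φ ψ)))) χ
  | wandR : LBI b g (.comma Δ (.frm φ)) ψ → LBI b g Δ (.wand φ ψ)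
  | cut (C : BCtx) : LBI true g Γ φ → LBI true g (C.fill (.frm φ)) χ →
      LBI true g (C.fill Γ) χ

/-! ### Okada-style semantic cut elimination -/

namespace CutElim

/-- Cut-free provability. -/
abbrev CF (Δ : Bunch) (φ : Formula) : Prop := LBI false true Δ φ

/-- The closure operator on sets of bunches. -/
def cl (X : Set Bunch) : Set Bunch :=
  {Δ | ∀ (C : BCtx) (ψ : Formula), (∀ Δ' ∈ X, CF (C.fill Δ') ψ) → CF (C.fill Δ) ψ}

theorem subset_cl {X : Set Bunch} : X ⊆ cl X :=
  fun _ h _ _ hh => hh _ h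

theorem cl_mono {X Y : Set Bunch} (hXY : X ⊆ Y) : cl X ⊆ cl Y :=
  fun _ h C ψ hh => h C ψ fun Δ' hΔ' => hh Δ' (hXY hΔ')

def Closed (X : Set Bunch) : Prop := cl X ⊆ X

theorem cl_closed (X : Set Bunch) : Closed (cl X) :=
  fun _ h C ψ hh => h C ψ fun Δ' hΔ' => hΔ' C ψ hh

/-- Equivalent bunches belong to the same closed sets. -/
theorem mem_of_equiv {X : Set Bunch} (hX : Closed X) {Δ Δ' : Bunch}
    (h : Δ ∈ X) (he : BEquiv Δ Δ') : Δ' ∈ X :=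
  hX fun C ψ hh => LBI.exch (hh Δ h) (BEquiv.congr C he)

/-- Composition of bunched contexts. -/
def comp : BCtx → BCtx → BCtx
  | .hole, D => D
  | .semiL C Δ, D => .semiL (comp C D) Δ
  | .semiR Δ C, D => .semiR Δ (comp C D)
  | .commaL C Δ, D => .commaL (comp C D) Δ
  | .commaR Δ C, D => .commaR Δ (comp C D)

theorem fill_comp (C D : BCtx) (Δ : Bunch) :
    (comp C D).fill Δ = C.fill (D.fill Δ) := by
  induction C <;> simp [comp, BCtx.fill, *]

def sPair (X Y : Set Bunch) : Set Bunch := {Δ | ∃ a ∈ X, ∃ b ∈ Y, Δ = .semi a b}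
def mPair (X Y : Set Bunch) : Set Bunch := {Δ | ∃ a ∈ X, ∃ b ∈ Y, Δ = .comma a b}
def sComp (X Y : Set Bunch) : Set Bunch := cl (sPair X Y)
def mComp (X Y : Set Bunch) : Set Bunch := cl (mPair X Y)
def sImp (X Y : Set Bunch) : Set Bunch := {Δ | ∀ a ∈ X, Bunch.semi Δ a ∈ Y}
def sWand (X Y : Set Bunch) : Set Bunch := {Δ | ∀ a ∈ X, Bunch.comma Δ a ∈ Y}

theorem sImp_closed {X Y : Set Bunch} (hY : Closed Y) : Closed (sImp X Y) := by
  intro Δ h a ha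
  refine hY fun C ψ hh => ?_
  have := h (comp C (.semiL .hole a)) ψ (fun Δ' hΔ' => by
    rw [fill_comp]; exact hh _ (hΔ' a ha))
  rwa [fill_comp] at this

theorem sWand_closed {X Y : Set Bunch} (hY : Closed Y) : Closed (sWand X Y) := by
  intro Δ h a ha
  refine hY fun C ψ hh => ?_
  have := h (comp C (.commaL .hole a)) ψ (fun Δ' hΔ' => by
    rw [fill_comp]; exact hh _ (hΔ' a ha))
  rwa [fill_comp] at this

/-- Weakening, semantically. -/
theorem semi_mem_left {X : Set Bunch} (hX : Closed X) {a : Bunch}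
    (h : a ∈ X) (b : Bunch) : Bunch.semi a b ∈ X :=
  hX fun C _ hh => LBI.weak C b (hh a h)

theorem semi_mem_right {X : Set Bunch} (hX : Closed X) {a : Bunch}
    (h : a ∈ X) (b : Bunch) : Bunch.semi b a ∈ X :=
  mem_of_equiv hX (semi_mem_left hX h b) (BEquiv.semiComm a b)

theorem sComp_sub_left {X Y : Set Bunch} (hX : Closed X) : sComp X Y ⊆ X := by
  refine fun Δ h => hX (cl_mono ?_ h)
  rintro Δ' ⟨a, ha, b, _, rfl⟩
  exact semi_mem_left hX ha b

theorem sComp_sub_right {X Y : Set Bunch} (hY : Closed Y) : sComp X Y ⊆ Y := by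
  refine fun Δ h => hY (cl_mono ?_ h)
  rintro Δ' ⟨a, _, b, hb, rfl⟩
  exact semi_mem_right hY hb a

/-- Contraction, semantically. -/
theorem sub_sComp_diag {X : Set Bunch} : X ⊆ sComp X X := by
  intro Δ h C ψ hh
  exact LBI.contr C (hh _ ⟨Δ, h, Δ, h, rfl⟩)

theorem inter_sub_sComp {X Y : Set Bunch} : X ∩ Y ⊆ sComp X Y := by
  rintro Δ ⟨h1, h2⟩ C ψ hh
  exact LBI.contr C (hh _ ⟨Δ, h1, Δ, h2, rfl⟩)

theorem sPair_mono {X X' Y Y' : Set Bunch} (h1 : X ⊆ X') (h2 : Y ⊆ Y') :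
    sPair X Y ⊆ sPair X' Y' := by
  rintro Δ ⟨a, ha, b, hb, rfl⟩
  exact ⟨a, h1 ha, b, h2 hb, rfl⟩

theorem mPair_mono {X X' Y Y' : Set Bunch} (h1 : X ⊆ X') (h2 : Y ⊆ Y') :
    mPair X Y ⊆ mPair X' Y' := by
  rintro Δ ⟨a, ha, b, hb, rfl⟩
  exact ⟨a, h1 ha, b, h2 hb, rfl⟩

theorem sComp_mono {X X' Y Y' : Set Bunch} (h1 : X ⊆ X') (h2 : Y ⊆ Y') :
    sComp X Y ⊆ sComp X' Y' := cl_mono (sPair_mono h1 h2)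

theorem mComp_mono {X X' Y Y' : Set Bunch} (h1 : X ⊆ X') (h2 : Y ⊆ Y') :
    mComp X Y ⊆ mComp X' Y' := cl_mono (mPair_mono h1 h2)

theorem sComp_cl_left {X Y : Set Bunch} : sComp (cl X) Y ⊆ sComp X Y := by
  refine fun Δ h => cl_closed _ (cl_mono ?_ h)
  rintro Δ' ⟨a, ha, b, hb, rfl⟩
  intro C ψ hh
  have := ha (comp C (.semiL .hole b)) ψ (fun x hx => by
    rw [fill_comp]; exact hh _ ⟨x, hx, b, hb, rfl⟩)
  rwa [fill_comp] at this

theorem sComp_cl_right {X Y : Set Bunch} : sComp X (cl Y) ⊆ sComp X Y := by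
  refine fun Δ h => cl_closed _ (cl_mono ?_ h)
  rintro Δ' ⟨a, ha, b, hb, rfl⟩
  intro C ψ hh
  have := hb (comp C (.semiR a .hole)) ψ (fun x hx => by
    rw [fill_comp]; exact hh _ ⟨a, ha, x, hx, rfl⟩)
  rwa [fill_comp] at this

theorem mComp_cl_left {X Y : Set Bunch} : mComp (cl X) Y ⊆ mComp X Y := by
  refine fun Δ h => cl_closed _ (cl_mono ?_ h)
  rintro Δ' ⟨a, ha, b, hb, rfl⟩
  intro C ψ hh
  have := ha (comp C (.commaL .hole b)) ψ (fun x hx => by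
    rw [fill_comp]; exact hh _ ⟨x, hx, b, hb, rfl⟩)
  rwa [fill_comp] at this

theorem mComp_cl_right {X Y : Set Bunch} : mComp X (cl Y) ⊆ mComp X Y := by
  refine fun Δ h => cl_closed _ (cl_mono ?_ h)
  rintro Δ' ⟨a, ha, b, hb, rfl⟩
  intro C ψ hh
  have := hb (comp C (.commaR a .hole)) ψ (fun x hx => by
    rw [fill_comp]; exact hh _ ⟨a, ha, x, hx, rfl⟩)
  rwa [fill_comp] at this

theorem sComp_union_left {X Y Z : Set Bunch} :
    sComp (X ∪ Y) Z ⊆ cl (sComp X Z ∪ sComp Y Z) := by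
  refine cl_mono ?_
  rintro Δ ⟨a, ha | ha, b, hb, rfl⟩
  · exact Or.inl (subset_cl ⟨a, ha, b, hb, rfl⟩)
  · exact Or.inr (subset_cl ⟨a, ha, b, hb, rfl⟩)

theorem sComp_union_right {X Y Z : Set Bunch} :
    sComp Z (X ∪ Y) ⊆ cl (sComp Z X ∪ sComp Z Y) := by
  refine cl_mono ?_
  rintro Δ ⟨a, ha, b, hb | hb, rfl⟩
  · exact Or.inl (subset_cl ⟨a, ha, b, hb, rfl⟩)
  · exact Or.inr (subset_cl ⟨a, ha, b, hb, rfl⟩)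

theorem mComp_union_left {X Y Z : Set Bunch} :
    mComp (X ∪ Y) Z ⊆ cl (mComp X Z ∪ mComp Y Z) := by
  refine cl_mono ?_
  rintro Δ ⟨a, ha | ha, b, hb, rfl⟩
  · exact Or.inl (subset_cl ⟨a, ha, b, hb, rfl⟩)
  · exact Or.inr (subset_cl ⟨a, ha, b, hb, rfl⟩)

theorem mComp_union_right {X Y Z : Set Bunch} :
    mComp Z (X ∪ Y) ⊆ cl (mComp Z X ∪ mComp Z Y) := by
  refine cl_mono ?_
  rintro Δ ⟨a, ha, b, hb | hb, rfl⟩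
  · exact Or.inl (subset_cl ⟨a, ha, b, hb, rfl⟩)
  · exact Or.inr (subset_cl ⟨a, ha, b, hb, rfl⟩)

theorem sComp_bot_left {Y : Set Bunch} : sComp (cl ∅) Y ⊆ cl ∅ := by
  refine (sComp_cl_left).trans (cl_mono ?_)
  rintro Δ ⟨a, ha, _⟩
  exact ha.elim

theorem sComp_bot_right {Y : Set Bunch} : sComp Y (cl ∅) ⊆ cl ∅ := by
  refine (sComp_cl_right).trans (cl_mono ?_)
  rintro Δ ⟨a, _, b, hb, _⟩
  exact hb.elim

theorem mComp_bot_left {Y : Set Bunch} : mComp (cl ∅) Y ⊆ cl ∅ := by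
  refine (mComp_cl_left).trans (cl_mono ?_)
  rintro Δ ⟨a, ha, _⟩
  exact ha.elim

theorem mComp_bot_right {Y : Set Bunch} : mComp Y (cl ∅) ⊆ cl ∅ := by
  refine (mComp_cl_right).trans (cl_mono ?_)
  rintro Δ ⟨a, _, b, hb, _⟩
  exact hb.elim

/-! Commutative monoid laws for `sComp`/`mComp`. -/

theorem sComp_comm_sub {X Y : Set Bunch} : sComp X Y ⊆ sComp Y X := by
  refine fun Δ h => cl_closed _ (cl_mono ?_ h)
  rintro Δ' ⟨a, ha, b, hb, rfl⟩
  exact mem_of_equiv (cl_closed _) (subset_cl ⟨b, hb, a, ha, rfl⟩) (BEquiv.semiComm b a)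

theorem sComp_comm (X Y : Set Bunch) : sComp X Y = sComp Y X :=
  Set.Subset.antisymm sComp_comm_sub sComp_comm_sub

theorem mComp_comm_sub {X Y : Set Bunch} : mComp X Y ⊆ mComp Y X := by
  refine fun Δ h => cl_closed _ (cl_mono ?_ h)
  rintro Δ' ⟨a, ha, b, hb, rfl⟩
  exact mem_of_equiv (cl_closed _) (subset_cl ⟨b, hb, a, ha, rfl⟩) (BEquiv.commaComm b a)

theorem mComp_comm (X Y : Set Bunch) : mComp X Y = mComp Y X :=
  Set.Subset.antisymm mComp_comm_sub mComp_comm_sub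

theorem sComp_assoc (X Y Z : Set Bunch) :
    sComp (sComp X Y) Z = sComp X (sComp Y Z) := by
  apply Set.Subset.antisymm
  · refine (sComp_cl_left).trans fun Δ h => cl_closed _ (cl_mono ?_ h)
    rintro Δ' ⟨_, ⟨x, hx, y, hy, rfl⟩, z, hz, rfl⟩
    refine mem_of_equiv (cl_closed _)
      (subset_cl ⟨x, hx, .semi y z, subset_cl ⟨y, hy, z, hz, rfl⟩, rfl⟩) ?_
    exact BEquiv.symm (BEquiv.semiAssoc x y z)
  · refine (sComp_cl_right).trans fun Δ h => cl_closed _ (cl_mono ?_ h)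
    rintro Δ' ⟨x, hx, _, ⟨y, hy, z, hz, rfl⟩, rfl⟩
    refine mem_of_equiv (cl_closed _)
      (subset_cl ⟨.semi x y, subset_cl ⟨x, hx, y, hy, rfl⟩, z, hz, rfl⟩) ?_
    exact BEquiv.semiAssoc x y z

theorem mComp_assoc (X Y Z : Set Bunch) :
    mComp (mComp X Y) Z = mComp X (mComp Y Z) := by
  apply Set.Subset.antisymm
  · refine (mComp_cl_left).trans fun Δ h => cl_closed _ (cl_mono ?_ h)
    rintro Δ' ⟨_, ⟨x, hx, y, hy, rfl⟩, z, hz, rfl⟩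
    refine mem_of_equiv (cl_closed _)
      (subset_cl ⟨x, hx, .comma y z, subset_cl ⟨y, hy, z, hz, rfl⟩, rfl⟩) ?_
    exact BEquiv.symm (BEquiv.commaAssoc x y z)
  · refine (mComp_cl_right).trans fun Δ h => cl_closed _ (cl_mono ?_ h)
    rintro Δ' ⟨x, hx, _, ⟨y, hy, z, hz, rfl⟩, rfl⟩
    refine mem_of_equiv (cl_closed _)
      (subset_cl ⟨.comma x y, subset_cl ⟨x, hx, y, hy, rfl⟩, z, hz, rfl⟩) ?_
    exact BEquiv.commaAssoc x y z

theorem sComp_unit {X : Set Bunch} (hX : Closed X) :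
    sComp X (cl {Bunch.eplus}) = X := by
  apply Set.Subset.antisymm
  · refine (sComp_cl_right).trans fun Δ h => hX (cl_mono ?_ h)
    rintro Δ' ⟨a, ha, b, rfl, rfl⟩
    exact mem_of_equiv hX ha (BEquiv.symm (BEquiv.semiUnit a))
  · intro a ha
    exact mem_of_equiv (cl_closed _)
      (subset_cl ⟨a, ha, .eplus, subset_cl rfl, rfl⟩) (BEquiv.semiUnit a)

theorem mComp_unit {X : Set Bunch} (hX : Closed X) :
    mComp X (cl {Bunch.etimes}) = X := by
  apply Set.Subset.antisymm
  · refine (mComp_cl_right).trans fun Δ h => hX (cl_mono ?_ h)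
    rintro Δ' ⟨a, ha, b, rfl, rfl⟩
    exact mem_of_equiv hX ha (BEquiv.symm (BEquiv.commaUnit a))
  · intro a ha
    exact mem_of_equiv (cl_closed _)
      (subset_cl ⟨a, ha, .etimes, subset_cl rfl, rfl⟩) (BEquiv.commaUnit a)

/-- The interpretation of formulas. -/
def sem : Formula → Set Bunch
  | .atom a => cl {.frm (.atom a)}
  | .top => Set.univ
  | .bot => cl ∅
  | .unit => cl {.etimes}
  | .and φ ψ => sem φ ∩ sem ψ
  | .or φ ψ => cl (sem φ ∪ sem ψ)
  | .imp φ ψ => sImp (sem φ) (sem ψ)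
  | .star φ ψ => mComp (sem φ) (sem ψ)
  | .wand φ ψ => sWand (sem φ) (sem ψ)

theorem sem_closed (φ : Formula) : Closed (sem φ) := by
  induction φ with
  | atom a => exact cl_closed _
  | top => exact fun Δ _ => trivial
  | bot => exact cl_closed _
  | unit => exact cl_closed _
  | and φ ψ ihφ ihψ =>
      exact fun Δ h => ⟨ihφ (cl_mono Set.inter_subset_left h),
        ihψ (cl_mono Set.inter_subset_right h)⟩
  | or φ ψ ihφ ihψ => exact cl_closed _
  | imp φ ψ ihφ ihψ => exact sImp_closed ihψ
  | star φ ψ ihφ ihψ => exact cl_closed _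
  | wand φ ψ ihφ ihψ => exact sWand_closed ihψ

/-- The interpretation of bunches. -/
def bsem : Bunch → Set Bunch
  | .frm φ => sem φ
  | .eplus => cl {.eplus}
  | .etimes => cl {.etimes}
  | .semi a b => sComp (bsem a) (bsem b)
  | .comma a b => mComp (bsem a) (bsem b)

theorem bsem_closed (Δ : Bunch) : Closed (bsem Δ) := by
  induction Δ with
  | frm φ => exact sem_closed φ
  | eplus => exact cl_closed _
  | etimes => exact cl_closed _
  | semi a b => exact cl_closed _
  | comma a b => exact cl_closed _

/-- The interpretation of bunched contexts. -/
def csem : BCtx → Set Bunch → Set Bunch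
  | .hole, X => X
  | .semiL C Δ, X => sComp (csem C X) (bsem Δ)
  | .semiR Δ C, X => sComp (bsem Δ) (csem C X)
  | .commaL C Δ, X => mComp (csem C X) (bsem Δ)
  | .commaR Δ C, X => mComp (bsem Δ) (csem C X)

theorem bsem_fill (C : BCtx) (Δ : Bunch) : bsem (C.fill Δ) = csem C (bsem Δ) := by
  induction C <;> simp [BCtx.fill, bsem, csem, *]

theorem csem_mono (C : BCtx) {X Y : Set Bunch} (h : X ⊆ Y) :
    csem C X ⊆ csem C Y := by
  induction C with
  | hole => exact h
  | semiL C Δ ih => exact sComp_mono ih subset_rfl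
  | semiR Δ C ih => exact sComp_mono subset_rfl ih
  | commaL C Δ ih => exact mComp_mono ih subset_rfl
  | commaR Δ C ih => exact mComp_mono subset_rfl ih

theorem csem_cl_union (C : BCtx) (X Y : Set Bunch) :
    csem C (cl (X ∪ Y)) ⊆ cl (csem C X ∪ csem C Y) := by
  induction C with
  | hole => exact subset_rfl
  | semiL C Δb ih =>
      exact (sComp_mono ih subset_rfl).trans (sComp_cl_left.trans sComp_union_left)
  | semiR Δb C ih =>
      exact (sComp_mono subset_rfl ih).trans (sComp_cl_right.trans sComp_union_right)
  | commaL C Δb ih =>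
      exact (mComp_mono ih subset_rfl).trans (mComp_cl_left.trans mComp_union_left)
  | commaR Δb C ih =>
      exact (mComp_mono subset_rfl ih).trans (mComp_cl_right.trans mComp_union_right)

theorem csem_bot (C : BCtx) : csem C (cl ∅) ⊆ cl ∅ := by
  induction C with
  | hole => exact subset_rfl
  | semiL C Δb ih => exact (sComp_mono ih subset_rfl).trans sComp_bot_left
  | semiR Δb C ih => exact (sComp_mono subset_rfl ih).trans sComp_bot_right
  | commaL C Δb ih => exact (mComp_mono ih subset_rfl).trans mComp_bot_left
  | commaR Δb C ih => exact (mComp_mono subset_rfl ih).trans mComp_bot_right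

theorem cl_bot_sub {X : Set Bunch} (hX : Closed X) : cl ∅ ⊆ X :=
  fun Δ h => hX (cl_mono (Set.empty_subset X) h)

/-- `bsem` respects coherent equivalence. -/
theorem bsem_equiv {Δ Δ' : Bunch} (h : BEquiv Δ Δ') : bsem Δ = bsem Δ' := by
  induction h with
  | refl Δ => rfl
  | symm _ ih => exact ih.symm
  | trans _ _ ih1 ih2 => exact ih1.trans ih2
  | semiComm Δ₁ Δ₂ => exact sComp_comm _ _
  | semiAssoc Δ₁ Δ₂ Δ₃ => exact sComp_assoc _ _ _
  | semiUnit Δ => exact sComp_unit (bsem_closed Δ)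
  | commaComm Δ₁ Δ₂ => exact mComp_comm _ _
  | commaAssoc Δ₁ Δ₂ Δ₃ => exact mComp_assoc _ _ _
  | commaUnit Δ => exact mComp_unit (bsem_closed Δ)
  | congr C _ ih => rw [bsem_fill, bsem_fill, ih]

/-- Okada's fundamental lemma: each formula belongs to its own interpretation,
and every member of the interpretation cut-free proves the formula. -/
theorem fundamental (φ : Formula) :
    Bunch.frm φ ∈ sem φ ∧ ∀ Δ ∈ sem φ, CF Δ φ := by
  induction φ with
  | atom a =>
      refine ⟨subset_cl rfl, fun Δ h => ?_⟩
      exact h .hole (.atom a) (fun Δ' hΔ' => by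
        rw [Set.mem_singleton_iff] at hΔ'; subst hΔ'; exact LBI.axAtom a)
  | top =>
      refine ⟨trivial, fun Δ _ => ?_⟩
      exact LBI.exch (LBI.weak .hole Δ (Δ' := .eplus) LBI.topR)
        (BEquiv.trans (BEquiv.semiComm _ _) (BEquiv.semiUnit Δ))
  | bot =>
      exact ⟨fun C ψ _ => LBI.botL C ψ,
        fun Δ h => h .hole .bot (fun Δ' hΔ' => hΔ'.elim)⟩
  | unit =>
      refine ⟨fun C ψ hh => LBI.unitL C (hh .etimes rfl), fun Δ h => ?_⟩
      exact h .hole .unit (fun Δ' hΔ' => by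
        rw [Set.mem_singleton_iff] at hΔ'; subst hΔ'; exact LBI.unitR)
  | and φ ψ ihφ ihψ =>
      obtain ⟨m1, p1⟩ := ihφ; obtain ⟨m2, p2⟩ := ihψ
      refine ⟨⟨sem_closed φ ?_, sem_closed ψ ?_⟩,
        fun Δ h => LBI.contr .hole (LBI.andR (p1 Δ h.1) (p2 Δ h.2))⟩
      · intro C χ hh
        exact LBI.andL C (LBI.weak C (.frm ψ) (hh _ m1))
      · intro C χ hh
        refine LBI.andL C (LBI.exch (LBI.weak C (.frm φ) (hh _ m2)) ?_)
        exact BEquiv.congr C (BEquiv.semiComm _ _)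
  | or φ ψ ihφ ihψ =>
      obtain ⟨m1, p1⟩ := ihφ; obtain ⟨m2, p2⟩ := ihψ
      refine ⟨fun C χ hh => LBI.orL C (hh _ (Or.inl m1)) (hh _ (Or.inr m2)),
        fun Δ h => ?_⟩
      exact h .hole (.or φ ψ) (fun Δ' hΔ' =>
        hΔ'.elim (fun hx => LBI.orR1 (p1 _ hx)) (fun hx => LBI.orR2 (p2 _ hx)))
  | imp φ ψ ihφ ihψ =>
      obtain ⟨m1, p1⟩ := ihφ; obtain ⟨m2, p2⟩ := ihψ
      constructor
      · intro a ha
        refine sem_closed ψ fun C χ hh => ?_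
        exact LBI.exch (LBI.impL C (p1 a ha) (hh _ m2))
          (BEquiv.congr C (BEquiv.semiComm _ _))
      · intro Δ h
        exact LBI.impR (p2 _ (h (.frm φ) m1))
  | star φ ψ ihφ ihψ =>
      obtain ⟨m1, p1⟩ := ihφ; obtain ⟨m2, p2⟩ := ihψ
      refine ⟨fun C χ hh => LBI.starL C (hh _ ⟨_, m1, _, m2, rfl⟩), fun Δ h => ?_⟩
      refine h .hole (.star φ ψ) ?_
      rintro Δ' ⟨a, ha, b, hb, rfl⟩
      exact LBI.starR (p1 a ha) (p2 b hb)
  | wand φ ψ ihφ ihψ =>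
      obtain ⟨m1, p1⟩ := ihφ; obtain ⟨m2, p2⟩ := ihψ
      constructor
      · intro a ha
        refine sem_closed ψ fun C χ hh => ?_
        exact LBI.exch (LBI.wandL C (p1 a ha) (hh _ m2))
          (BEquiv.congr C (BEquiv.commaComm _ _))
      · intro Δ h
        exact LBI.wandR (p2 _ (h (.frm φ) m1))

/-- Soundness of full LBI in the syntactic model. -/
theorem sound {b g : Bool} {Δ : Bunch} {φ : Formula} (h : LBI b g Δ φ) :
    bsem Δ ⊆ sem φ := by
  induction h with
  | ax φ => exact subset_rfl
  | axAtom a => exact subset_rfl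
  | exch _ he ih => rw [← bsem_equiv he]; exact ih
  | @weak b g Δ' φ C Δ'' _ ih =>
      rw [bsem_fill]
      refine fun x hx => ih ?_
      rw [bsem_fill]
      exact csem_mono C (sComp_sub_left (bsem_closed Δ')) hx
  | @contr b g Δ' φ C _ ih =>
      rw [bsem_fill]
      refine fun x hx => ih ?_
      rw [bsem_fill]
      exact csem_mono C sub_sComp_diag hx
  | botL C φ =>
      rw [bsem_fill]
      exact (csem_bot C).trans (cl_bot_sub (sem_closed φ))
  | topR => exact fun x _ => trivial
  | unitR => exact subset_rfl
  | @unitL b g φ C _ ih =>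
      rw [bsem_fill]
      refine fun x hx => ih ?_
      rw [bsem_fill]
      exact hx
  | @andL b g φ ψ χ C _ ih =>
      rw [bsem_fill]
      refine fun x hx => ih ?_
      rw [bsem_fill]
      exact csem_mono C inter_sub_sComp hx
  | andR _ _ ih1 ih2 =>
      exact fun x hx => ⟨sComp_sub_left (sem_closed _) (sComp_mono ih1 ih2 hx),
        sComp_sub_right (sem_closed _) (sComp_mono ih1 ih2 hx)⟩
  | @orL b g φ χ ψ C _ _ ih1 ih2 =>
      rw [bsem_fill] at ih1 ih2 ⊢
      refine (csem_cl_union C _ _).trans fun x hx => sem_closed χ (cl_mono ?_ hx)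
      rintro y (hy | hy)
      · exact ih1 hy
      · exact ih2 hy
  | orR1 _ ih => exact fun x hx => subset_cl (Or.inl (ih hx))
  | orR2 _ ih => exact fun x hx => subset_cl (Or.inr (ih hx))
  | @impL b g Γ φ ψ χ C _ _ ih1 ih2 =>
      rw [bsem_fill] at ih2 ⊢
      refine fun x hx => ih2 (csem_mono C ?_ hx)
      refine fun y hy => sem_closed ψ (cl_mono ?_ hy)
      rintro z ⟨a, ha, f, hf, rfl⟩
      exact mem_of_equiv (sem_closed ψ) (hf a (ih1 ha)) (BEquiv.semiComm f a)
  | impR _ ih =>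
      intro x hx a ha
      exact ih (subset_cl ⟨x, hx, a, ha, rfl⟩)
  | @starL b g φ ψ χ C _ ih =>
      rw [bsem_fill]
      refine fun x hx => ih ?_
      rw [bsem_fill]
      exact hx
  | starR _ _ ih1 ih2 => exact mComp_mono ih1 ih2
  | @wandL b g Γ φ ψ χ C _ _ ih1 ih2 =>
      rw [bsem_fill] at ih2 ⊢
      refine fun x hx => ih2 (csem_mono C ?_ hx)
      refine fun y hy => sem_closed ψ (cl_mono ?_ hy)
      rintro z ⟨a, ha, f, hf, rfl⟩
      exact mem_of_equiv (sem_closed ψ) (hf a (ih1 ha)) (BEquiv.commaComm f a)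
  | wandR _ ih =>
      intro x hx a ha
      exact ih (subset_cl ⟨x, hx, a, ha, rfl⟩)
  | @cut g Γ φ χ C _ _ ih1 ih2 =>
      rw [bsem_fill] at ih2 ⊢
      exact (csem_mono C ih1).trans ih2

/-- Every bunch belongs to its own interpretation. -/
theorem bsem_self (Δ : Bunch) : Δ ∈ bsem Δ := by
  induction Δ with
  | frm φ => exact (fundamental φ).1
  | eplus => exact subset_cl rfl
  | etimes => exact subset_cl rfl
  | semi a b iha ihb => exact subset_cl ⟨a, iha, b, ihb, rfl⟩
  | comma a b iha ihb => exact subset_cl ⟨a, iha, b, ihb, rfl⟩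

end CutElim

/-- **Cut-elimination for LBI** (Lemma 1): if the bunched sequent `Δ ⊢ φ` has an
LBI-proof, then it has a cut-free LBI-proof. -/
theorem LBI_cut_elimination (Δ : Bunch) (φ : Formula) :
    LBI true true Δ φ → LBI false true Δ φ := by
  intro h
  exact (CutElim.fundamental φ).2 Δ (CutElim.sound h (CutElim.bsem_self Δ))

end BIPaper
end

section
/- The left disjunction rule of LBI is invertible: if Δ(φ∨ψ) ⊢ χ has a cut-free LBI-proof, then both Δ(φ) ⊢ χ and Δ(ψ) ⊢ χ have cut-free LBI-proofs. -/
namespace BIPaper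

/-- `Rep θ ρ Δ Δ'` : `Δ'` is obtained from `Δ` by replacing some leaf
occurrences of the formula `θ` by `ρ`. -/
inductive Rep (θ ρ : Formula) : Bunch → Bunch → Prop where
  | frm (φ) : Rep θ ρ (.frm φ) (.frm φ)
  | rep : Rep θ ρ (.frm θ) (.frm ρ)
  | eplus : Rep θ ρ .eplus .eplus
  | etimes : Rep θ ρ .etimes .etimes
  | semi : Rep θ ρ a a' → Rep θ ρ b b' → Rep θ ρ (.semi a b) (.semi a' b')
  | comma : Rep θ ρ a a' → Rep θ ρ b b' → Rep θ ρ (.comma a b) (.comma a' b')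

/-- The same replacement relation on bunched contexts. -/
inductive RepC (θ ρ : Formula) : BCtx → BCtx → Prop where
  | hole : RepC θ ρ .hole .hole
  | semiL : RepC θ ρ C C' → Rep θ ρ Δ Δ' → RepC θ ρ (.semiL C Δ) (.semiL C' Δ')
  | semiR : Rep θ ρ Δ Δ' → RepC θ ρ C C' → RepC θ ρ (.semiR Δ C) (.semiR Δ' C')
  | commaL : RepC θ ρ C C' → Rep θ ρ Δ Δ' → RepC θ ρ (.commaL C Δ) (.commaL C' Δ')
  | commaR : Rep θ ρ Δ Δ' → RepC θ ρ C C' → RepC θ ρ (.commaR Δ C) (.commaR Δ' C')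

theorem Rep.rfl {θ ρ : Formula} : ∀ Δ, Rep θ ρ Δ Δ
  | .frm φ => .frm φ
  | .eplus => .eplus
  | .etimes => .etimes
  | .semi a b => .semi (Rep.rfl a) (Rep.rfl b)
  | .comma a b => .comma (Rep.rfl a) (Rep.rfl b)

theorem RepC.rfl {θ ρ : Formula} : ∀ C, RepC θ ρ C C
  | .hole => .hole
  | .semiL C Δ => .semiL (RepC.rfl C) (Rep.rfl Δ)
  | .semiR Δ C => .semiR (Rep.rfl Δ) (RepC.rfl C)
  | .commaL C Δ => .commaL (RepC.rfl C) (Rep.rfl Δ)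
  | .commaR Δ C => .commaR (Rep.rfl Δ) (RepC.rfl C)

theorem fill_rep {θ ρ : Formula} {C C' : BCtx} {Δ Δ' : Bunch}
    (hC : RepC θ ρ C C') (hΔ : Rep θ ρ Δ Δ') :
    Rep θ ρ (C.fill Δ) (C'.fill Δ') := by
  induction hC with
  | hole => exact hΔ
  | semiL _ h ih => exact .semi ih h
  | semiR h _ ih => exact .semi h ih
  | commaL _ h ih => exact .comma ih h
  | commaR h _ ih => exact .comma h ih

theorem rep_fill_inv {θ ρ : Formula} :
    ∀ (C : BCtx) {Δ X : Bunch}, Rep θ ρ (C.fill Δ) X →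
    ∃ C' Δ', RepC θ ρ C C' ∧ Rep θ ρ Δ Δ' ∧ X = C'.fill Δ' := by
  intro C
  induction C with
  | hole => exact fun h => ⟨.hole, _, .hole, h, rfl⟩
  | semiL C₀ Δ₂ ih =>
    intro Δ X h
    cases h with
    | semi h1 h2 =>
      obtain ⟨C', Δ', hC, hΔ, rfl⟩ := ih h1
      exact ⟨.semiL C' _, Δ', .semiL hC h2, hΔ, rfl⟩
  | semiR Δ₂ C₀ ih =>
    intro Δ X h
    cases h with
    | semi h1 h2 =>
      obtain ⟨C', Δ', hC, hΔ, rfl⟩ := ih h2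
      exact ⟨.semiR _ C', Δ', .semiR h1 hC, hΔ, rfl⟩
  | commaL C₀ Δ₂ ih =>
    intro Δ X h
    cases h with
    | comma h1 h2 =>
      obtain ⟨C', Δ', hC, hΔ, rfl⟩ := ih h1
      exact ⟨.commaL C' _, Δ', .commaL hC h2, hΔ, rfl⟩
  | commaR Δ₂ C₀ ih =>
    intro Δ X h
    cases h with
    | comma h1 h2 =>
      obtain ⟨C', Δ', hC, hΔ, rfl⟩ := ih h2
      exact ⟨.commaR _ C', Δ', .commaR h1 hC, hΔ, rfl⟩

theorem rep_frm_inv {θ ρ φ₀ : Formula} {X : Bunch}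
    (h : Rep θ ρ (.frm φ₀) X) : X = .frm φ₀ ∨ (φ₀ = θ ∧ X = .frm ρ) := by
  cases h with
  | frm => exact Or.inl rfl
  | rep => exact Or.inr ⟨rfl, rfl⟩

theorem rep_semi_inv {θ ρ : Formula} {a b X : Bunch}
    (h : Rep θ ρ (.semi a b) X) :
    ∃ a' b', Rep θ ρ a a' ∧ Rep θ ρ b b' ∧ X = .semi a' b' := by
  cases h with
  | semi h1 h2 => exact ⟨_, _, h1, h2, rfl⟩

theorem rep_comma_inv {θ ρ : Formula} {a b X : Bunch}
    (h : Rep θ ρ (.comma a b) X) :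
    ∃ a' b', Rep θ ρ a a' ∧ Rep θ ρ b b' ∧ X = .comma a' b' := by
  cases h with
  | comma h1 h2 => exact ⟨_, _, h1, h2, rfl⟩

theorem rep_eplus_inv {θ ρ : Formula} {X : Bunch}
    (h : Rep θ ρ .eplus X) : X = .eplus := by cases h; rfl

theorem rep_etimes_inv {θ ρ : Formula} {X : Bunch}
    (h : Rep θ ρ .etimes X) : X = .etimes := by cases h; rfl

/-- `Rep` can be transferred across coherent equivalence, in both directions. -/
theorem rep_bequiv {θ ρ : Formula} {Δ₁ Δ₂ : Bunch} (h : BEquiv Δ₁ Δ₂) :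
    (∀ X, Rep θ ρ Δ₁ X → ∃ Y, Rep θ ρ Δ₂ Y ∧ BEquiv X Y) ∧
    (∀ Y, Rep θ ρ Δ₂ Y → ∃ X, Rep θ ρ Δ₁ X ∧ BEquiv X Y) := by
  induction h with
  | refl Δ => exact ⟨fun X hX => ⟨X, hX, .refl X⟩, fun Y hY => ⟨Y, hY, .refl Y⟩⟩
  | symm _ ih =>
    constructor
    · intro X hX
      obtain ⟨W, h1, h2⟩ := ih.2 X hX
      exact ⟨W, h1, h2.symm⟩
    · intro Y hY
      obtain ⟨W, h1, h2⟩ := ih.1 Y hY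
      exact ⟨W, h1, h2.symm⟩
  | trans _ _ ih1 ih2 =>
    constructor
    · intro X hX
      obtain ⟨Y, hY, e1⟩ := ih1.1 X hX
      obtain ⟨Z, hZ, e2⟩ := ih2.1 Y hY
      exact ⟨Z, hZ, e1.trans e2⟩
    · intro Z hZ
      obtain ⟨Y, hY, e2⟩ := ih2.2 Z hZ
      obtain ⟨X, hX, e1⟩ := ih1.2 Y hY
      exact ⟨X, hX, e1.trans e2⟩
  | semiComm a b =>
    constructor
    · intro X hX
      obtain ⟨a', b', h1, h2, rfl⟩ := rep_semi_inv hX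
      exact ⟨.semi b' a', .semi h2 h1, .semiComm a' b'⟩
    · intro Y hY
      obtain ⟨b', a', h1, h2, rfl⟩ := rep_semi_inv hY
      exact ⟨.semi a' b', .semi h2 h1, .semiComm a' b'⟩
  | semiAssoc a b c =>
    constructor
    · intro X hX
      obtain ⟨ab', c', hab, hc, rfl⟩ := rep_semi_inv hX
      obtain ⟨a', b', ha, hb, rfl⟩ := rep_semi_inv hab
      exact ⟨_, .semi ha (.semi hb hc), .semiAssoc a' b' c'⟩
    · intro Y hY
      obtain ⟨a', bc', ha, hbc, rfl⟩ := rep_semi_inv hY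
      obtain ⟨b', c', hb, hc, rfl⟩ := rep_semi_inv hbc
      exact ⟨_, .semi (.semi ha hb) hc, .semiAssoc a' b' c'⟩
  | semiUnit Δ =>
    constructor
    · intro X hX
      obtain ⟨Δ', e', hΔ, he, rfl⟩ := rep_semi_inv hX
      cases rep_eplus_inv he
      exact ⟨Δ', hΔ, .semiUnit Δ'⟩
    · intro Y hY
      exact ⟨.semi Y .eplus, .semi hY .eplus, .semiUnit Y⟩
  | commaComm a b =>
    constructor
    · intro X hX
      obtain ⟨a', b', h1, h2, rfl⟩ := rep_comma_inv hX
      exact ⟨.comma b' a', .comma h2 h1, .commaComm a' b'⟩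
    · intro Y hY
      obtain ⟨b', a', h1, h2, rfl⟩ := rep_comma_inv hY
      exact ⟨.comma a' b', .comma h2 h1, .commaComm a' b'⟩
  | commaAssoc a b c =>
    constructor
    · intro X hX
      obtain ⟨ab', c', hab, hc, rfl⟩ := rep_comma_inv hX
      obtain ⟨a', b', ha, hb, rfl⟩ := rep_comma_inv hab
      exact ⟨_, .comma ha (.comma hb hc), .commaAssoc a' b' c'⟩
    · intro Y hY
      obtain ⟨a', bc', ha, hbc, rfl⟩ := rep_comma_inv hY
      obtain ⟨b', c', hb, hc, rfl⟩ := rep_comma_inv hbc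
      exact ⟨_, .comma (.comma ha hb) hc, .commaAssoc a' b' c'⟩
  | commaUnit Δ =>
    constructor
    · intro X hX
      obtain ⟨Δ', e', hΔ, he, rfl⟩ := rep_comma_inv hX
      cases rep_etimes_inv he
      exact ⟨Δ', hΔ, .commaUnit Δ'⟩
    · intro Y hY
      exact ⟨.comma Y .etimes, .comma hY .etimes, .commaUnit Y⟩
  | congr C _ ih =>
    constructor
    · intro X hX
      obtain ⟨C', Δ₀, hC, hΔ, rfl⟩ := rep_fill_inv C hX
      obtain ⟨Y₀, hY, e⟩ := ih.1 Δ₀ hΔ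
      exact ⟨C'.fill Y₀, fill_rep hC hY, .congr C' e⟩
    · intro Y hY
      obtain ⟨C', Δ₀, hC, hΔ, rfl⟩ := rep_fill_inv C hY
      obtain ⟨X₀, hX, e⟩ := ih.2 Δ₀ hΔ
      exact ⟨C'.fill X₀, fill_rep hC hX, .congr C' e⟩

/-- Main lemma: derivability is stable under replacing some occurrences of
`φ∨ψ` in the antecedent by `φ` (or by `ψ`). -/
theorem rep_main {b g : Bool} {Δ : Bunch} {χ : Formula}
    (h : LBI b g Δ χ) {φ ψ ρ : Formula} (hρ : ρ = φ ∨ ρ = ψ) :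
    ∀ X, Rep (.or φ ψ) ρ Δ X → LBI b g X χ := by
  induction h with
  | ax φ₀ =>
    intro X hX
    rcases rep_frm_inv hX with rfl | ⟨rfl, rfl⟩
    · exact .ax φ₀
    · rcases hρ with rfl | rfl
      · exact .orR1 (.ax _)
      · exact .orR2 (.ax _)
  | axAtom a =>
    intro X hX
    rcases rep_frm_inv hX with rfl | ⟨h1, rfl⟩
    · exact .axAtom a
    · exact absurd h1 (by simp)
  | exch _ heq ih =>
    intro X hX
    obtain ⟨X₀, hr, he⟩ := (rep_bequiv heq).2 X hX
    exact .exch (ih X₀ hr) he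
  | weak C Δ'' _ ih =>
    intro X hX
    obtain ⟨C', Y, hC, hY, rfl⟩ := rep_fill_inv C hX
    obtain ⟨a', b', ha, hb, rfl⟩ := rep_semi_inv hY
    exact .weak C' b' (ih _ (fill_rep hC ha))
  | contr C _ ih =>
    intro X hX
    obtain ⟨C', Y, hC, hY, rfl⟩ := rep_fill_inv C hX
    exact .contr C' (ih _ (fill_rep hC (.semi hY hY)))
  | botL C φ₀ =>
    intro X hX
    obtain ⟨C', Y, hC, hY, rfl⟩ := rep_fill_inv C hX
    rcases rep_frm_inv hY with rfl | ⟨h1, rfl⟩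
    · exact .botL C' φ₀
    · exact absurd h1 (by simp)
  | topR =>
    intro X hX
    cases rep_eplus_inv hX
    exact .topR
  | unitR =>
    intro X hX
    cases rep_etimes_inv hX
    exact .unitR
  | unitL C _ ih =>
    intro X hX
    obtain ⟨C', Y, hC, hY, rfl⟩ := rep_fill_inv C hX
    rcases rep_frm_inv hY with rfl | ⟨h1, rfl⟩
    · exact .unitL C' (ih _ (fill_rep hC .etimes))
    · exact absurd h1 (by simp)
  | andL C _ ih =>
    intro X hX
    obtain ⟨C', Y, hC, hY, rfl⟩ := rep_fill_inv C hX
    rcases rep_frm_inv hY with rfl | ⟨h1, rfl⟩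
    · exact .andL C' (ih _ (fill_rep hC (.semi (.frm _) (.frm _))))
    · exact absurd h1 (by simp)
  | andR _ _ ih1 ih2 =>
    intro X hX
    obtain ⟨a', b', ha, hb, rfl⟩ := rep_semi_inv hX
    exact .andR (ih1 _ ha) (ih2 _ hb)
  | orL C _ _ ih1 ih2 =>
    intro X hX
    obtain ⟨C', Y, hC, hY, rfl⟩ := rep_fill_inv C hX
    rcases rep_frm_inv hY with rfl | ⟨h1, rfl⟩
    · exact .orL C' (ih1 _ (fill_rep hC (.frm _)))
        (ih2 _ (fill_rep hC (.frm _)))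
    · obtain ⟨rfl, rfl⟩ : _ ∧ _ := by
        injection h1 with e1 e2
        exact ⟨e1, e2⟩
      rcases hρ with rfl | rfl
      · exact ih1 _ (fill_rep hC (.frm _))
      · exact ih2 _ (fill_rep hC (.frm _))
  | orR1 _ ih => exact fun X hX => .orR1 (ih X hX)
  | orR2 _ ih => exact fun X hX => .orR2 (ih X hX)
  | impL C _ _ ih1 ih2 =>
    intro X hX
    obtain ⟨C', Y, hC, hY, rfl⟩ := rep_fill_inv C hX
    obtain ⟨Γ', Z, hΓ, hZ, rfl⟩ := rep_semi_inv hY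
    rcases rep_frm_inv hZ with rfl | ⟨h1, rfl⟩
    · exact .impL C' (ih1 _ hΓ) (ih2 _ (fill_rep hC (.frm _)))
    · exact absurd h1 (by simp)
  | impR _ ih =>
    intro X hX
    exact .impR (ih _ (.semi hX (.frm _)))
  | starL C _ ih =>
    intro X hX
    obtain ⟨C', Y, hC, hY, rfl⟩ := rep_fill_inv C hX
    rcases rep_frm_inv hY with rfl | ⟨h1, rfl⟩
    · exact .starL C' (ih _ (fill_rep hC (.comma (.frm _) (.frm _))))
    · exact absurd h1 (by simp)
  | starR _ _ ih1 ih2 =>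
    intro X hX
    obtain ⟨a', b', ha, hb, rfl⟩ := rep_comma_inv hX
    exact .starR (ih1 _ ha) (ih2 _ hb)
  | wandL C _ _ ih1 ih2 =>
    intro X hX
    obtain ⟨C', Y, hC, hY, rfl⟩ := rep_fill_inv C hX
    obtain ⟨Γ', Z, hΓ, hZ, rfl⟩ := rep_comma_inv hY
    rcases rep_frm_inv hZ with rfl | ⟨h1, rfl⟩
    · exact .wandL C' (ih1 _ hΓ) (ih2 _ (fill_rep hC (.frm _)))
    · exact absurd h1 (by simp)
  | wandR _ ih =>
    intro X hX
    exact .wandR (ih _ (.comma hX (.frm _)))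
  | cut C _ _ ih1 ih2 =>
    intro X hX
    obtain ⟨C', Γ', hC, hΓ, rfl⟩ := rep_fill_inv C hX
    exact .cut C' (ih1 _ hΓ) (ih2 _ (fill_rep hC (.frm _)))

/-- **Invertibility of `∨L`**: if `Δ(φ∨ψ) ⊢ χ` has a cut-free LBI-proof, then
both `Δ(φ) ⊢ χ` and `Δ(ψ) ⊢ χ` have cut-free LBI-proofs. -/
theorem orL_invertible (C : BCtx) (φ ψ χ : Formula) :
    LBI false true (C.fill (.frm (.or φ ψ))) χ →
    LBI false true (C.fill (.frm φ)) χ ∧ LBI false true (C.fill (.frm ψ)) χ := by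
  intro h
  exact ⟨rep_main h (Or.inl rfl) _ (fill_rep (RepC.rfl C) .rep),
    rep_main h (Or.inr rfl) _ (fill_rep (RepC.rfl C) .rep)⟩

end BIPaper
end
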